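/- arXiv:2310.04377 — 4 statements merged into one kernel-verified Lean document; each statement's English description precedes it below -/
import Mathlib

section
/- Let n ≥ 2 and let F ∈ Matₙ(ℂ) be principal nilpotent. Suppose (h, e, F) and (h′, e′, F) are two sl₂-triples of n×n complex matrices with the same third element F. Then there exists a unique traceless matrix z ∈ Matₙ(ℂ) commuting with F such that exp(z)·h·exp(z)⁻¹ = h′ and exp(z)·e·exp(z)⁻¹ = e′, where exp denotes the matrix exponential. (Thus the exponentials of the traceless part of the centralizer of F act simply transitively on the sl₂-triples containing F.) -/
/-!
The centralizer of a principal nilpotent `F` is spanned by `1, F, …, F ^ (n - 1)`, and if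
`⁅h, F⁆ = -2F` then `⁅F ^ k, h⁆ = 2k F ^ k`: in these coordinates `z ↦ ⁅z, h⁆` is diagonal, with
the nonzero eigenvalues `2k`, `k ≥ 1`, on the traceless part. Given two triples, `h' - h` lies in
the traceless centralizer, so there is exactly one traceless `z` commuting with `F` with
`⁅z, h⁆ = h' - h`. Since `⁅z, h⁆` commutes with `z`, `exp z * h * (exp z)⁻¹ = h + ⁅z, h⁆`, and the
conditions on `h` single out that `z`. Conjugating `(h, e, F)` by `exp z` gives a triple
`(h', _, F)`, and the second element of such a triple is unique: the difference of two
candidates would be an eigenvector of `⁅h', ·⁆` with eigenvalue `2` inside the centralizer, where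
the eigenvalues are `-2k`.
-/

open Matrix

/-- A square matrix `N` of size `n` is *principal nilpotent* if it is nilpotent and
`N ^ (n - 1) ≠ 0`. -/
def Matrix.IsPrincipalNilpotent {n : ℕ} (N : Matrix (Fin n) (Fin n) ℂ) : Prop :=
  IsNilpotent N ∧ N ^ (n - 1) ≠ 0

/-- `(h, e, f)` is an `sl₂`-triple of matrices: `⁅h,e⁆ = 2e`, `⁅h,f⁆ = -2f`, `⁅e,f⁆ = h`. -/
def IsSl2TripleM {n : ℕ} (h e f : Matrix (Fin n) (Fin n) ℂ) : Prop :=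
  h * e - e * h = (2 : ℂ) • e ∧ h * f - f * h = (-2 : ℂ) • f ∧ e * f - f * e = h

open NormedSpace

theorem exp_mul_eq_add_mul_exp {𝔸 : Type*} [NormedRing 𝔸] [NormedAlgebra ℚ 𝔸] [CompleteSpace 𝔸]
    {x y w : 𝔸} (hxw : Commute x w) (hxy : x * y - y * x = w) :
    exp x * y = (y + w) * exp x := by
  have hpow (m : ℕ) : x ^ (m + 1) * y = y * x ^ (m + 1) + (m + 1 : ℚ) • (w * x ^ m) := by
    induction m with
    | zero => simp [← hxy]
    | succ m ih =>
      rw [pow_succ' x (m + 1), mul_assoc, ih, mul_add, ← mul_assoc, eq_add_of_sub_eq' hxy,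
        mul_smul_comm, ← mul_assoc x w, hxw.eq, mul_assoc w x, ← pow_succ', add_mul,
        mul_assoc y x, ← pow_succ']
      push_cast
      module
  have hs : HasSum (fun m => (m.factorial : ℚ)⁻¹ • x ^ m) (exp x) := exp_series_hasSum_exp' x
  refine (hs.mul_right y).unique ((hasSum_nat_add_iff' 1).mp ?_)
  convert ((hasSum_nat_add_iff' 1).mpr (hs.mul_left y)).add (hs.mul_left w) using 1
  · ext m
    rw [smul_mul_assoc, hpow, smul_add, smul_smul, mul_smul_comm, mul_smul_comm, Nat.factorial_succ]
    congr 2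
    push_cast
    field_simp
  · simp only [add_mul, Finset.sum_range_one, Nat.factorial_zero, Nat.cast_one, inv_one, pow_zero,
      one_smul, one_mul, mul_one]
    abel

theorem Matrix.exp_mul_mul_inv_exp_eq_add {m 𝔸 : Type*} [Fintype m] [DecidableEq m]
    [NormedCommRing 𝔸] [NormedAlgebra ℚ 𝔸] [CompleteSpace 𝔸] {x y w : Matrix m m 𝔸}
    (hxw : Commute x w) (hxy : x * y - y * x = w) :
    exp x * y * (exp x)⁻¹ = y + w := by
  -- `exp` does not depend on a norm, so any matrix norm (here the `L∞` operator norm) will do.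
  have : exp x * y = (y + w) * exp x :=
    @exp_mul_eq_add_mul_exp _ Matrix.linftyOpNormedRing Matrix.linftyOpNormedAlgebra
      (by exact (inferInstance : CompleteSpace (Matrix m m 𝔸))) x y w hxw hxy
  rw [this, mul_nonsing_inv_cancel_right _ _ ((isUnit_iff_isUnit_det _).mp (isUnit_exp x))]

theorem Commute.sum_smul_pow_left {R A : Type*} [CommSemiring R] [Semiring A] [Algebra R A]
    {F B : A} (h : Commute F B) {n : ℕ} (c : Fin n → R) :
    Commute (∑ k, c k • F ^ (k : ℕ)) B :=
  Commute.sum_left _ _ _ fun k _ => (h.pow_left k).smul_left (c k)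

theorem commute_sub_of_mul_sub_mul_eq {A : Type*} [Ring A] {a b c : A}
    (h : a * c - c * a = b * c - c * b) : Commute (a - b) c := by
  rw [Commute, SemiconjBy, ← sub_eq_zero]
  calc (a - b) * c - c * (a - b) = (a * c - c * a) - (b * c - c * b) := by noncomm_ring
    _ = 0 := by rw [h, sub_self]

section Bracket

variable {R A : Type*} [CommRing R] [Ring A] [Algebra R A] {F h : A}

theorem pow_mul_sub_mul_pow_eq_smul (hhF : h * F - F * h = (-2 : R) • F) (k : ℕ) :
    F ^ k * h - h * F ^ k = (2 * k : R) • F ^ k := by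
  induction k with
  | zero => simp
  | succ k ih =>
    calc F ^ (k + 1) * h - h * F ^ (k + 1)
        = F * (F ^ k * h - h * F ^ k) - (h * F - F * h) * F ^ k := by
          rw [pow_succ']
          noncomm_ring
      _ = (2 * (k + 1 : ℕ) : R) • F ^ (k + 1) := by
          rw [ih, hhF, mul_smul_comm, smul_mul_assoc, ← pow_succ', ← sub_smul]
          push_cast
          ring_nf

theorem sum_smul_pow_mul_sub_mul_sum (hhF : h * F - F * h = (-2 : R) • F) {n : ℕ}
    (c : Fin n → R) :
    (∑ k, c k • F ^ (k : ℕ)) * h - h * ∑ k, c k • F ^ (k : ℕ) =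
      ∑ k, (2 * k * c k) • F ^ (k : ℕ) := by
  simp only [Finset.sum_mul, Finset.mul_sum, ← Finset.sum_sub_distrib, smul_mul_assoc,
    mul_smul_comm, ← smul_sub, pow_mul_sub_mul_pow_eq_smul hhF, smul_smul, mul_comm (c _)]

end Bracket

theorem Matrix.exists_mulVec_ne_zero {m n R : Type*} [Fintype n] [DecidableEq n] [CommSemiring R]
    {M : Matrix m n R} (hM : M ≠ 0) : ∃ v, M *ᵥ v ≠ 0 := by
  by_contra! h
  exact hM (ext_of_mulVec_single fun j => by rw [h, zero_mulVec])

section PrincipalNilpotent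

variable {K : Type*} [Field K] {n : ℕ} {F : Matrix (Fin n) (Fin n) K}

theorem Matrix.pow_card_eq_zero_of_isNilpotent {m : Type*} [Fintype m] [DecidableEq m]
    {M : Matrix m m K} (hM : IsNilpotent M) : M ^ Fintype.card m = 0 := by
  have hchar : M.charpoly = Polynomial.X ^ Fintype.card m :=
    sub_eq_zero.mp (isNilpotent_charpoly_sub_pow_of_isNilpotent hM).eq_zero
  simpa [hchar] using aeval_self_charpoly M

theorem Matrix.pow_eq_zero_of_isNilpotent (hF : IsNilpotent F) : F ^ n = 0 := by
  simpa using pow_card_eq_zero_of_isNilpotent hF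

theorem Matrix.linearIndependent_pow_mulVec (hFn : F ^ n = 0) {v : Fin n → K}
    (hv : F ^ (n - 1) *ᵥ v ≠ 0) : LinearIndependent K fun k : Fin n => F ^ (k : ℕ) *ᵥ v := by
  rw [Fintype.linearIndependent_iff]
  intro g hg j
  induction j using WellFoundedLT.induction with
  | _ j ih =>
  -- Applying `F ^ (n - 1 - j)` kills every term beyond `j`; those below `j` vanish by induction.
  have hsum := congrArg (F ^ (n - 1 - j) *ᵥ ·) hg
  simp only [mulVec_sum, mulVec_smul, mulVec_mulVec, ← pow_add, mulVec_zero] at hsum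
  rw [Finset.sum_eq_single j] at hsum
  · rw [Nat.sub_add_cancel (by omega)] at hsum
    exact (smul_eq_zero.mp hsum).resolve_right hv
  · intro k _ hkj
    rcases lt_or_gt_of_ne hkj with hlt | hgt
    · rw [ih k hlt, zero_smul]
    · rw [pow_eq_zero_of_le (by omega) hFn, zero_mulVec, smul_zero]
  · simp

theorem Matrix.linearIndependent_pow (hFn : F ^ n = 0) (hF : F ^ (n - 1) ≠ 0) :
    LinearIndependent K fun k : Fin n => F ^ (k : ℕ) := by
  obtain ⟨v, hv⟩ := exists_mulVec_ne_zero hF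
  rw [Fintype.linearIndependent_iff]
  intro g hg
  refine Fintype.linearIndependent_iff.mp (linearIndependent_pow_mulVec hFn hv) g ?_
  simpa [sum_mulVec, smul_mulVec] using congrArg (· *ᵥ v) hg

theorem Matrix.exists_eq_sum_smul_pow_of_commute (hFn : F ^ n = 0) (hF : F ^ (n - 1) ≠ 0)
    {A : Matrix (Fin n) (Fin n) K} (hA : Commute A F) :
    ∃ c : Fin n → K, A = ∑ k, c k • F ^ (k : ℕ) := by
  obtain ⟨v, hv⟩ := exists_mulVec_ne_zero hF
  obtain ⟨i, -⟩ := Function.ne_iff.mp hv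
  have : Nonempty (Fin n) := ⟨i⟩
  let b := basisOfLinearIndependentOfCardEqFinrank (linearIndependent_pow_mulVec hFn hv) (by simp)
  have hb (k : Fin n) : b k = F ^ (k : ℕ) *ᵥ v := by simp [b]
  set B := ∑ k, b.repr (A *ᵥ v) k • F ^ (k : ℕ)
  have hAv : A *ᵥ v = B *ᵥ v := by
    conv_lhs => rw [← b.sum_repr (A *ᵥ v)]
    simp [B, sum_mulVec, smul_mulVec, hb]
  have hB : Commute B F := (Commute.refl F).sum_smul_pow_left _
  -- `A` and `B` commute with `F` and agree on `v`, hence on the basis `F ^ k *ᵥ v`.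
  refine ⟨b.repr (A *ᵥ v), toLin'.injective (b.ext fun k => ?_)⟩
  simp only [toLin'_apply, hb]
  calc A *ᵥ (F ^ (k : ℕ) *ᵥ v) = F ^ (k : ℕ) *ᵥ (A *ᵥ v) := by
        rw [mulVec_mulVec, (hA.pow_right _).eq, ← mulVec_mulVec]
    _ = F ^ (k : ℕ) *ᵥ (B *ᵥ v) := by rw [hAv]
    _ = B *ᵥ (F ^ (k : ℕ) *ᵥ v) := by
        rw [mulVec_mulVec, ← (hB.pow_right _).eq, ← mulVec_mulVec]

theorem Matrix.trace_sum_smul_pow [NeZero n] (hFn : F ^ n = 0) (c : Fin n → K) :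
    (∑ k, c k • F ^ (k : ℕ)).trace = n * c 0 := by
  rw [trace_sum, Finset.sum_eq_single 0]
  · simp [mul_comm]
  · intro k _ hk
    have hFk : IsNilpotent (F ^ (k : ℕ)) :=
      IsNilpotent.pow_of_pos ⟨n, hFn⟩ (Fin.val_ne_zero_iff.mpr hk)
    rw [trace_smul, (isNilpotent_trace_of_isNilpotent hFk).eq_zero, smul_zero]
  · simp

variable [CharZero K]

theorem Matrix.trace_sum_smul_pow_eq_zero_iff [NeZero n] (hFn : F ^ n = 0) {c : Fin n → K} :
    (∑ k, c k • F ^ (k : ℕ)).trace = 0 ↔ c 0 = 0 := by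
  simp [trace_sum_smul_pow hFn, NeZero.ne n]

theorem Matrix.existsUnique_traceless_mul_sub_mul_eq (hFn : F ^ n = 0) (hF : F ^ (n - 1) ≠ 0)
    {h D : Matrix (Fin n) (Fin n) K} (hhF : h * F - F * h = (-2 : K) • F) (hD : Commute D F)
    (hD₀ : D.trace = 0) :
    ∃! z : Matrix (Fin n) (Fin n) K, z.trace = 0 ∧ Commute z F ∧ z * h - h * z = D := by
  have : NeZero n := ⟨by rintro rfl; exact hF (Subsingleton.elim _ _)⟩
  obtain ⟨d, rfl⟩ := exists_eq_sum_smul_pow_of_commute hFn hF hD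
  rw [trace_sum_smul_pow_eq_zero_iff hFn] at hD₀
  -- At `k = 0` the coefficient `d 0 / (2 * 0)` is `0`, since division by zero returns `0`.
  refine ⟨∑ k, (d k / (2 * k)) • F ^ (k : ℕ), ⟨?_, (Commute.refl F).sum_smul_pow_left _, ?_⟩, ?_⟩
  · rw [trace_sum_smul_pow_eq_zero_iff hFn]
    simp
  · rw [sum_smul_pow_mul_sub_mul_sum hhF]
    refine Finset.sum_congr rfl fun k _ => ?_
    rcases eq_or_ne k 0 with rfl | hk
    · simp [hD₀]
    · have : (k : K) ≠ 0 := Nat.cast_ne_zero.mpr (Fin.val_ne_zero_iff.mpr hk)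
      field_simp
  · rintro z ⟨hz₀, hzF, hzD⟩
    obtain ⟨c, rfl⟩ := exists_eq_sum_smul_pow_of_commute hFn hF hzF
    rw [trace_sum_smul_pow_eq_zero_iff hFn] at hz₀
    rw [sum_smul_pow_mul_sub_mul_sum hhF] at hzD
    have hcd := Fintype.linearIndependent_iffₛ.mp (linearIndependent_pow hFn hF) _ _ hzD
    refine Finset.sum_congr rfl fun k _ => ?_
    rcases eq_or_ne k 0 with rfl | hk
    · simp [hz₀]
    · have : (k : K) ≠ 0 := Nat.cast_ne_zero.mpr (Fin.val_ne_zero_iff.mpr hk)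
      rw [← hcd k]
      field_simp

theorem Matrix.eq_zero_of_commute_of_mul_sub_mul_eq_two_smul (hFn : F ^ n = 0)
    (hF : F ^ (n - 1) ≠ 0) {h u : Matrix (Fin n) (Fin n) K} (hhF : h * F - F * h = (-2 : K) • F)
    (hu : Commute u F) (huh : h * u - u * h = (2 : K) • u) : u = 0 := by
  obtain ⟨a, rfl⟩ := exists_eq_sum_smul_pow_of_commute hFn hF hu
  have hsum : ∑ k, (2 * k * a k) • F ^ (k : ℕ) = ∑ k, (-2 * a k) • F ^ (k : ℕ) := by
    rw [← sum_smul_pow_mul_sub_mul_sum hhF, ← neg_sub, huh, Finset.smul_sum]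
    simp [smul_smul]
  have ha := Fintype.linearIndependent_iffₛ.mp (linearIndependent_pow hFn hF) _ _ hsum
  refine Finset.sum_eq_zero fun k _ => ?_
  have : (2 * k + 2 : K) ≠ 0 := by norm_cast
  rw [(mul_eq_zero.mp (by linear_combination ha k : (2 * k + 2 : K) * a k = 0)).resolve_left this,
    zero_smul]

end PrincipalNilpotent

section Sl2Triple

variable {n : ℕ} {h e f : Matrix (Fin n) (Fin n) ℂ}

theorem IsSl2TripleM.trace_eq_zero (hT : IsSl2TripleM h e f) : h.trace = 0 := by
  rw [← hT.2.2, trace_sub, trace_mul_comm, sub_self]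

theorem IsSl2TripleM.conj (hT : IsSl2TripleM h e f) {U : Matrix (Fin n) (Fin n) ℂ}
    (hU : IsUnit U) : IsSl2TripleM (U * h * U⁻¹) (U * e * U⁻¹) (U * f * U⁻¹) := by
  have hmul (a b : Matrix (Fin n) (Fin n) ℂ) : U * a * U⁻¹ * (U * b * U⁻¹) = U * (a * b) * U⁻¹ := by
    simp only [mul_assoc, nonsing_inv_mul_cancel_left _ _ ((isUnit_iff_isUnit_det U).mp hU)]
  obtain ⟨hhe, hhf, hef⟩ := hT
  refine ⟨?_, ?_, ?_⟩ <;>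
    simp only [hmul, ← sub_mul, ← mul_sub, hhe, hhf, hef, mul_smul_comm, smul_mul_assoc]

theorem IsSl2TripleM.eq_of_isPrincipalNilpotent (hF : f.IsPrincipalNilpotent)
    {e' : Matrix (Fin n) (Fin n) ℂ} (hT : IsSl2TripleM h e f) (hT' : IsSl2TripleM h e' f) :
    e = e' := by
  refine sub_eq_zero.mp (eq_zero_of_commute_of_mul_sub_mul_eq_two_smul
    (pow_eq_zero_of_isNilpotent hF.1) hF.2 hT.2.1 (commute_sub_of_mul_sub_mul_eq ?_) ?_)
  · rw [hT.2.2, hT'.2.2]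
  · rw [mul_sub, sub_mul, smul_sub, ← hT.1, ← hT'.1]
    abel

theorem Matrix.IsPrincipalNilpotent.exp_mul_mul_inv_exp_eq_add (hF : f.IsPrincipalNilpotent)
    (hhf : h * f - f * h = (-2 : ℂ) • f) {z : Matrix (Fin n) (Fin n) ℂ} (hz : Commute z f) :
    exp z * h * (exp z)⁻¹ = h + (z * h - h * z) := by
  refine Matrix.exp_mul_mul_inv_exp_eq_add ?_ rfl
  obtain ⟨c, rfl⟩ := exists_eq_sum_smul_pow_of_commute (pow_eq_zero_of_isNilpotent hF.1) hF.2 hz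
  rw [sum_smul_pow_mul_sub_mul_sum hhf]
  exact (((Commute.refl f).sum_smul_pow_left _).symm.sum_smul_pow_left _).symm

end Sl2Triple

theorem sl2_triples_simply_transitive_general
    (n : ℕ) (F : Matrix (Fin n) (Fin n) ℂ)
    (hF : F.IsPrincipalNilpotent)
    (h e h' e' : Matrix (Fin n) (Fin n) ℂ)
    (hT : IsSl2TripleM h e F) (hT' : IsSl2TripleM h' e' F) :
    ∃! z : Matrix (Fin n) (Fin n) ℂ,
      z.trace = 0 ∧ z * F = F * z ∧
      NormedSpace.exp z * h * (NormedSpace.exp z)⁻¹ = h' ∧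
      NormedSpace.exp z * e * (NormedSpace.exp z)⁻¹ = e' := by
  have hD : Commute (h' - h) F := commute_sub_of_mul_sub_mul_eq (by rw [hT.2.1, hT'.2.1])
  have hD₀ : (h' - h).trace = 0 := by rw [trace_sub, hT.trace_eq_zero, hT'.trace_eq_zero, sub_self]
  obtain ⟨z, ⟨hz₀, hzF, hzh⟩, huniq⟩ := existsUnique_traceless_mul_sub_mul_eq
    (pow_eq_zero_of_isNilpotent hF.1) hF.2 hT.2.1 hD hD₀
  have hconj_h : exp z * h * (exp z)⁻¹ = h' := by
    rw [hF.exp_mul_mul_inv_exp_eq_add hT.2.1 hzF, hzh, add_sub_cancel]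
  have hconj_F : exp z * F * (exp z)⁻¹ = F := by
    rw [hzF.exp_left.eq, mul_nonsing_inv_cancel_right _ _
      ((isUnit_iff_isUnit_det _).mp (isUnit_exp z))]
  refine ⟨z, ⟨hz₀, hzF, hconj_h, ?_⟩, ?_⟩
  · have := hT.conj (isUnit_exp z)
    rw [hconj_h, hconj_F] at this
    exact this.eq_of_isPrincipalNilpotent hF hT'
  · rintro y ⟨hy₀, hyF, hyh, -⟩
    rw [hF.exp_mul_mul_inv_exp_eq_add hT.2.1 hyF] at hyh
    exact huniq y ⟨hy₀, hyF, eq_sub_of_add_eq' hyh⟩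

/-- The exponentials of the traceless part of the centralizer of a principal nilpotent
matrix `F` act simply transitively on the `sl₂`-triples with third element `F`. -/
theorem sl2_triples_simply_transitive
    (n : ℕ) (hn : 2 ≤ n) (F : Matrix (Fin n) (Fin n) ℂ)
    (hF : F.IsPrincipalNilpotent)
    (h e h' e' : Matrix (Fin n) (Fin n) ℂ)
    (hT : IsSl2TripleM h e F) (hT' : IsSl2TripleM h' e' F) :
    ∃! z : Matrix (Fin n) (Fin n) ℂ,
      z.trace = 0 ∧ z * F = F * z ∧
      NormedSpace.exp z * h * (NormedSpace.exp z)⁻¹ = h' ∧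
      NormedSpace.exp z * e * (NormedSpace.exp z)⁻¹ = e' :=
  sl2_triples_simply_transitive_general n F hF h e h' e' hT hT'
end

section
/- Let n ≥ 2, let N ∈ Matₙ(ℂ) be principal nilpotent, and let J, J′ ∈ Matₙ(ℂ) be invertible symmetric matrices with NᵀJ = JN and NᵀJ′ = J′N (i.e. the involutions σ_J and σ_{J′} both negate N). Then there exists a unique nilpotent matrix z ∈ Matₙ(ℂ) commuting with N such that σ_{J′}(X) = σ_J(exp(z)·X·exp(z)⁻¹) for all X ∈ Matₙ(ℂ). (Thus the exponentials of the nilpotent part of the centralizer of N act simply transitively on the involutions of this conjugacy class negating N.) -/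
/-!
The matrix `A = J⁻¹ J'` commutes with `N`, and the centralizer of a principal nilpotent matrix is
`ℂ[N]`, so `A = a (1 + M)` with `a ≠ 0` and `M` nilpotent in `ℂ[N]`. A nilpotent logarithm `z` of
`1 + M` inside `ℂ[N]` exists (by successive approximation: `exp (-M) (1 + M) = 1 + O(M²)`), and
since conjugation by `J⁻¹ J'` turns `σ_J` into `σ_{J'}`, `z` solves the problem. Any two solutions
`y, z` lie in the commutative algebra `ℂ[N]`, so `exp (y - z)` commutes with every matrix; being a
unipotent scalar it is `1`, and `exp` is injective on nilpotent elements.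
-/

open Matrix

theorem NormedSpace.exp_eq_isNilpotent_exp {A : Type*} [Ring A] [Algebra ℚ A]
    [TopologicalSpace A] [IsTopologicalRing A] {a : A} (ha : IsNilpotent a) :
    NormedSpace.exp a = IsNilpotent.exp a := by
  obtain ⟨k, hk⟩ := ha
  rw [NormedSpace.exp_eq_tsum_rat, IsNilpotent.exp_eq_sum hk]
  exact tsum_eq_sum fun i hi ↦ by rw [pow_eq_zero_of_le (by simpa using hi) hk, smul_zero]

namespace IsNilpotent

section CommRing

open Finset
open scoped Nat

variable {R : Type*} [CommRing R] [Algebra ℚ R]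

theorem exists_exp_eq_one_add_add_sq_mul {a : R} (ha : IsNilpotent a) :
    ∃ c, exp a = 1 + a + a ^ 2 * c := by
  obtain ⟨k, hk⟩ := ha
  refine ⟨∑ i ∈ range k, ((i + 2)! : ℚ)⁻¹ • a ^ i, ?_⟩
  rw [exp_eq_sum (pow_eq_zero_of_le (k.le_add_right 2) hk), sum_range_succ', sum_range_succ',
    mul_sum]
  simp only [mul_smul_comm, ← pow_add, add_comm 2, zero_add, pow_one, pow_zero,
    Nat.factorial_one, Nat.factorial_zero, Nat.cast_one, inv_one, one_smul]
  abel

theorem exists_exp_eq_one_add {M : R} (hM : IsNilpotent M) :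
    ∃ z, IsNilpotent z ∧ exp z = 1 + M := by
  obtain ⟨k, hk⟩ := id hM
  induction k using Nat.strong_induction_on generalizing M with
  | _ k ih =>
  rcases le_or_gt k 1 with hk1 | hk1
  · obtain rfl : M = 0 := by simpa using pow_eq_zero_of_le hk1 hk
    exact ⟨0, .zero, by simp⟩
  · obtain ⟨c, hc⟩ := hM.neg.exists_exp_eq_one_add_add_sq_mul
    -- `exp (-M)` corrects `1 + M` up to a multiple of `M ^ 2`, which has smaller nilpotency order
    set D := c * (1 + M) - 1
    have hB : exp (-M) * (1 + M) = 1 + M ^ 2 * D := by rw [hc]; ring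
    have hBk : (M ^ 2 * D) ^ (k - 1) = 0 := by
      rw [mul_pow, ← pow_mul, pow_eq_zero_of_le (by omega) hk, zero_mul]
    obtain ⟨z, hz, hzexp⟩ := ih (k - 1) (by omega) ⟨k - 1, hBk⟩ hBk
    refine ⟨M + z, (Commute.all M z).isNilpotent_add hM hz, ?_⟩
    rw [exp_add_of_commute (Commute.all M z) hM hz, hzexp, ← hB, ← mul_assoc,
      exp_mul_exp_neg_self hM, one_mul]

end CommRing

section Ring

open scoped IsMulCommutative

variable {A : Type*} [Ring A] [Algebra ℚ A]

theorem exists_mem_adjoin_exp_eq_one_add {M : A} (hM : IsNilpotent M) :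
    ∃ z ∈ Algebra.adjoin ℚ {M}, IsNilpotent z ∧ exp z = 1 + M := by
  set S := Algebra.adjoin ℚ {M}
  have hM' : IsNilpotent (⟨M, Algebra.self_mem_adjoin_singleton ℚ M⟩ : S) :=
    (IsNilpotent.map_iff (f := S.val) Subtype.val_injective).mp hM
  obtain ⟨z, hz, hexp⟩ := exists_exp_eq_one_add hM'
  exact ⟨z, z.2, hz.map S.val, by simpa using (map_exp hz S.val).symm.trans (congrArg S.val hexp)⟩

theorem eq_zero_of_exp_eq_one {a : A} (ha : IsNilpotent a) (h : exp a = 1) : a = 0 := by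
  set S := Algebra.adjoin ℚ {a}
  set a' : S := ⟨a, Algebra.self_mem_adjoin_singleton ℚ a⟩
  have ha' : IsNilpotent a' := (IsNilpotent.map_iff (f := S.val) Subtype.val_injective).mp ha
  obtain ⟨c, hc⟩ := ha'.exists_exp_eq_one_add_add_sq_mul
  have hunit : IsUnit (a' * c + 1) :=
    ((Commute.all a' c).isNilpotent_mul_right ha').isUnit_add_one
  have h' : exp a' = 1 := Subtype.val_injective <| show S.val (exp a') = S.val 1 by
    rw [map_exp ha', map_one]; exact h
  have ha'0 : a' * (a' * c + 1) = 0 := by linear_combination hc.symm.trans h'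
  simpa [a'] using congrArg S.val (hunit.mul_left_eq_zero.mp ha'0)

theorem eq_zero_of_exp_eq_algebraMap {K : Type*} [Field K] [Nontrivial A] [Algebra K A] {w : A}
    {r : K} (hw : IsNilpotent w) (h : exp w = algebraMap K A r) : w = 0 := by
  have hr : IsNilpotent (r - 1) := by
    rw [← IsNilpotent.map_iff (algebraMap K A).injective, map_sub, map_one, ← h]
    exact isNilpotent_exp_sub_one hw
  exact eq_zero_of_exp_eq_one hw (by rw [h, sub_eq_zero.mp hr.eq_zero, map_one])

end Ring

open Polynomial in
theorem exists_isNilpotent_smul_sub_one_of_mem_adjoin {K A : Type*} [Field K] [Ring A]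
    [Algebra K A] {N U : A} (hN : IsNilpotent N) (hU : U ∈ Algebra.adjoin K {N})
    (hUunit : IsUnit U) :
    ∃ a : K, a ≠ 0 ∧ IsNilpotent (a • U - 1) := by
  cases subsingleton_or_nontrivial A
  · exact ⟨1, one_ne_zero, 1, Subsingleton.elim _ _⟩
  rw [Algebra.adjoin_singleton_eq_range_aeval] at hU
  obtain ⟨p, rfl⟩ := (AlgHom.mem_range _).mp hU
  obtain ⟨q, hq⟩ := X_dvd_sub_C (p := p)
  have hnil : IsNilpotent (aeval N p - algebraMap K A (p.coeff 0)) := by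
    rw [← aeval_C N, ← map_sub, hq, map_mul, aeval_X]
    exact (Algebra.commute_of_mem_adjoin_self
      (aeval_mem_adjoin_singleton K N)).isNilpotent_mul_right hN
  have h0 : p.coeff 0 ≠ 0 := fun h0 ↦ hnil.not_isUnit (by simpa [h0] using hUunit)
  refine ⟨(p.coeff 0)⁻¹, inv_ne_zero h0, ?_⟩
  convert hnil.smul (p.coeff 0)⁻¹ using 1
  rw [smul_sub, Algebra.algebraMap_eq_smul_one, smul_smul, inv_mul_cancel₀ h0, one_smul]

end IsNilpotent

namespace Module.End

open Module

variable {K V : Type*} [Field K] [AddCommGroup V] [Module K V]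

theorem pow_finrank_eq_zero_of_isNilpotent [FiniteDimensional K V] {f : End K V}
    (hf : IsNilpotent f) : f ^ finrank K V = 0 := by
  simpa [hf.charpoly_eq_X_pow_finrank] using f.aeval_self_charpoly

theorem linearIndependent_pow_apply {f : End K V} {v : V} {m : ℕ} (hv : (f ^ (m - 1)) v ≠ 0)
    (hm : (f ^ m) v = 0) : LinearIndependent K fun i : Fin m ↦ (f ^ (i : ℕ)) v := by
  have hvanish : ∀ k ≥ m, (f ^ k) v = 0 := fun k hk ↦ by
    rw [← Nat.sub_add_cancel hk, pow_add, mul_apply, hm, map_zero]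
  rw [Fintype.linearIndependent_iff]
  intro c hc i
  induction i using WellFoundedLT.induction with
  | _ i ih =>
  -- applying `f ^ (m - 1 - i)` kills every term but the `i`-th one
  have := congrArg (f ^ (m - 1 - i)) hc
  rw [map_sum, map_zero, Finset.sum_eq_single i] at this
  · rw [map_smul, ← mul_apply, ← pow_add, Nat.sub_add_cancel (by omega)] at this
    exact (smul_eq_zero.mp this).resolve_right hv
  · intro j _ hji
    rcases lt_or_gt_of_ne hji with h | h
    · rw [ih j h, zero_smul, map_zero]
    · rw [map_smul, ← mul_apply, ← pow_add, hvanish _ (by omega), smul_zero]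
  · simp

theorem mem_adjoin_of_commute [FiniteDimensional K V] {f g : End K V} (hf : IsNilpotent f)
    (hf' : f ^ (finrank K V - 1) ≠ 0) (hg : Commute g f) : g ∈ Algebra.adjoin K {f} := by
  obtain ⟨v, hv⟩ : ∃ v, (f ^ (finrank K V - 1)) v ≠ 0 := by
    by_contra! h
    exact hf' (LinearMap.ext h)
  have hspan : Submodule.span K (Set.range fun i : Fin (finrank K V) ↦ (f ^ (i : ℕ)) v) = ⊤ :=
    (linearIndependent_pow_apply hv (by rw [pow_finrank_eq_zero_of_isNilpotent hf,
      LinearMap.zero_apply])).span_eq_top_of_card_eq_finrank' (Fintype.card_fin _)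
  obtain ⟨c, hc⟩ :=
    (Submodule.mem_span_range_iff_exists_fun K).mp (hspan ▸ Submodule.mem_top : g v ∈ _)
  set p := ∑ i, c i • f ^ (i : ℕ)
  have hp : p ∈ Algebra.adjoin K {f} :=
    Subalgebra.sum_mem _ fun i _ ↦ Subalgebra.smul_mem _
      (Subalgebra.pow_mem _ (Algebra.self_mem_adjoin_singleton K f) _) _
  have hpv : p v = g v := by simp [p, ← hc]
  suffices g = p from this ▸ hp
  refine LinearMap.ext_on_range hspan fun i ↦ ?_
  rw [← mul_apply, (hg.pow_right _).eq, mul_apply, ← hpv, ← mul_apply,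
    ((Algebra.commute_of_mem_adjoin_self hp).pow_left _).eq, mul_apply]

end Module.End

namespace Matrix

variable {K ι : Type*} [Field K] [Fintype ι] [DecidableEq ι]

theorem mem_adjoin_of_commute {N X : Matrix ι ι K} (hN : IsNilpotent N)
    (hN' : N ^ (Fintype.card ι - 1) ≠ 0) (hX : Commute X N) : X ∈ Algebra.adjoin K {N} := by
  let e := Matrix.toLinAlgEquiv' (R := K) (n := ι)
  have hN'e : e N ^ (Module.finrank K (ι → K) - 1) ≠ 0 := by
    rwa [Module.finrank_fintype_fun_eq_card, ← map_pow, ne_eq, map_eq_zero_iff _ e.injective]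
  have hmap : e X ∈ (Algebra.adjoin K {N}).map (e : Matrix ι ι K →ₐ[K] _) := by
    rw [AlgHom.map_adjoin_singleton]
    exact Module.End.mem_adjoin_of_commute (hN.map e) hN'e (hX.map e)
  obtain ⟨Y, hY, hYX⟩ := Subalgebra.mem_map.mp hmap
  exact e.injective hYX ▸ hY

theorem commute_inv_mul_of_transpose_mul_eq {N J J' : Matrix ι ι K} (hJ : IsUnit J.det)
    (hNJ : Nᵀ * J = J * N) (hNJ' : Nᵀ * J' = J' * N) : Commute (J⁻¹ * J') N := by
  have hNJinv : J⁻¹ * Nᵀ = N * J⁻¹ := calc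
    J⁻¹ * Nᵀ = J⁻¹ * (Nᵀ * J) * J⁻¹ := by rw [Matrix.mul_assoc, mul_nonsing_inv_cancel_right _ _ hJ]
    _ = N * J⁻¹ := by rw [hNJ, nonsing_inv_mul_cancel_left _ _ hJ]
  calc J⁻¹ * J' * N = J⁻¹ * Nᵀ * J' := by rw [Matrix.mul_assoc, ← hNJ', Matrix.mul_assoc]
    _ = N * (J⁻¹ * J') := by rw [hNJinv, Matrix.mul_assoc]

theorem inv_mul_transpose_mul_injective {J : Matrix ι ι K} (hJ : IsUnit J.det) :
    Function.Injective fun X : Matrix ι ι K ↦ J⁻¹ * Xᵀ * J := by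
  intro X Y h
  simpa [Matrix.mul_assoc, mul_nonsing_inv_cancel_left _ _ hJ, mul_nonsing_inv _ hJ] using
    congrArg (fun W ↦ (J * W * J⁻¹)ᵀ) h

theorem inv_mul_transpose_conj_smul_inv_mul {J J' : Matrix ι ι K} {c : K} (hJ : IsUnit J.det)
    (hJ' : IsUnit J'.det) (hJs : Jᵀ = J) (hJ's : J'ᵀ = J') (hc : c ≠ 0) (X : Matrix ι ι K) :
    J⁻¹ * ((c • (J⁻¹ * J')) * X * (c • (J⁻¹ * J'))⁻¹)ᵀ * J = J'⁻¹ * Xᵀ * J' := by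
  have hinv : (c • (J⁻¹ * J'))⁻¹ = c⁻¹ • (J'⁻¹ * J) := inv_eq_right_inv <| by
    simp [smul_smul, hc, Matrix.mul_assoc, mul_nonsing_inv_cancel_left _ _ hJ',
      nonsing_inv_mul _ hJ]
  simp [hinv, transpose_nonsing_inv, hJs, hJ's, Matrix.mul_assoc, hc, smul_smul,
    nonsing_inv_mul_cancel_left _ _ hJ, nonsing_inv_mul _ hJ]

open IsNilpotent in
theorem eq_of_forall_exp_conj_eq [CharZero K] [Nonempty ι] {y z : Matrix ι ι K}
    (hy : IsNilpotent y) (hz : IsNilpotent z) (hyz : Commute y z)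
    (h : ∀ X, exp y * X * (exp y)⁻¹ = exp z * X * (exp z)⁻¹) : y = z := by
  have hinv {a : Matrix ι ι K} (ha : IsNilpotent a) : (exp a)⁻¹ = exp (-a) :=
    inv_eq_right_inv (exp_mul_exp_neg_self ha)
  have hexp : exp (y - z) = exp (-z) * exp y := by
    rw [sub_eq_neg_add, IsNilpotent.exp_add_of_commute hyz.symm.neg_left hz.neg hy]
  have hcomm (X : Matrix ι ι K) : Commute X (exp (y - z)) := by
    have := congrArg (fun W ↦ exp (-z) * W * exp y) (h X)
    simp only [hinv hy, hinv hz, Matrix.mul_assoc, exp_neg_mul_exp_self hy, Matrix.mul_one,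
      ← Matrix.mul_assoc (exp (-z)) (exp z), exp_neg_mul_exp_self hz, Matrix.one_mul] at this
    rw [hexp, Commute, SemiconjBy, ← this, Matrix.mul_assoc]
  obtain ⟨r, hr⟩ := mem_range_scalar_of_commute_single fun i j _ ↦ hcomm (single i j 1)
  exact sub_eq_zero.mp <| eq_zero_of_exp_eq_algebraMap (hyz.isNilpotent_sub hy hz)
    (r := r) (by rw [← hr, algebraMap_eq_diagonal]; rfl)

end Matrix

/-- For an invertible symmetric matrix `J`, the involution `σ_J (X) = -J⁻¹ Xᵀ J` negates a
principal nilpotent matrix `N` iff `Nᵀ J = J N`.  The exponentials of the nilpotent part of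
the centralizer of `N` act simply transitively on the involutions of this conjugacy class
negating `N`. -/
theorem involutions_negating_simply_transitive
    (n : ℕ) (hn : 2 ≤ n) (N J J' : Matrix (Fin n) (Fin n) ℂ)
    (hN : IsNilpotent N ∧ N ^ (n - 1) ≠ 0)
    (hJ : IsUnit J) (hJsymm : Jᵀ = J)
    (hJ' : IsUnit J') (hJ'symm : J'ᵀ = J')
    (hNJ : Nᵀ * J = J * N) (hNJ' : Nᵀ * J' = J' * N) :
    ∃! z : Matrix (Fin n) (Fin n) ℂ,
      IsNilpotent z ∧ z * N = N * z ∧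
      ∀ X : Matrix (Fin n) (Fin n) ℂ,
        -(J'⁻¹ * Xᵀ * J') =
          -(J⁻¹ * (NormedSpace.exp z * X * (NormedSpace.exp z)⁻¹)ᵀ * J) := by
  have : Nonempty (Fin n) := ⟨⟨0, by omega⟩⟩
  obtain ⟨hNnil, hNpow⟩ := hN
  have hcentral {X : Matrix (Fin n) (Fin n) ℂ} (hX : X * N = N * X) : X ∈ Algebra.adjoin ℂ {N} :=
    mem_adjoin_of_commute hNnil (by rwa [Fintype.card_fin]) hX
  have hAN := commute_inv_mul_of_transpose_mul_eq ((isUnit_iff_isUnit_det J).mp hJ) hNJ hNJ'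
  obtain ⟨a, ha, hM⟩ := hNnil.exists_isNilpotent_smul_sub_one_of_mem_adjoin (hcentral hAN)
    ((isUnit_nonsing_inv_iff.mpr hJ).mul hJ')
  rw [isUnit_iff_isUnit_det] at hJ hJ'
  obtain ⟨z, hzM, hz, hexp⟩ := hM.exists_mem_adjoin_exp_eq_one_add
  rw [add_sub_cancel] at hexp
  have hzN : z * N = N * z := (Algebra.commute_of_mem_adjoin_singleton_of_commute hzM
    ((hAN.symm.smul_right a).sub_right (Commute.one_right N))).eq.symm
  have hzσ (X : Matrix (Fin n) (Fin n) ℂ) : -(J'⁻¹ * Xᵀ * J') =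
      -(J⁻¹ * (NormedSpace.exp z * X * (NormedSpace.exp z)⁻¹)ᵀ * J) := by
    rw [NormedSpace.exp_eq_isNilpotent_exp hz, hexp,
      inv_mul_transpose_conj_smul_inv_mul hJ hJ' hJsymm hJ'symm ha]
  refine ⟨z, ⟨hz, hzN, hzσ⟩, fun y ⟨hy, hyN, hyσ⟩ ↦ ?_⟩
  have hyz : Commute y z := Algebra.commute_of_mem_adjoin_singleton_of_commute (hcentral hzN)
    (Algebra.commute_of_mem_adjoin_self (hcentral hyN)).symm
  refine eq_of_forall_exp_conj_eq hy hz hyz fun X ↦ ?_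
  rw [← NormedSpace.exp_eq_isNilpotent_exp hy, ← NormedSpace.exp_eq_isNilpotent_exp hz]
  exact inv_mul_transpose_mul_injective hJ (neg_injective ((hyσ X).symm.trans (hzσ X)))
end

section
/- Let n ≥ 2, let N ∈ Matₙ(ℂ) be principal nilpotent and let M ∈ Matₙ(ℂ) be traceless with MN = NM. Then: (i) there exist unique complex numbers μ₂, μ₃, …, μₙ such that M = μ₂·N + μ₃·N² + ⋯ + μₙ·N^(n−1); and (ii) with these coefficients, one has ((v·N + conj(v)·M)^(n−1) ≠ 0 for every nonzero v ∈ ℂ) if and only if |μ₂| ≠ 1. -/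
/-! `N` has a cyclic vector: any `x` with `N ^ (n - 1) x ≠ 0`, so that `x, N x, …, N ^ (n - 1) x`
is a basis. A matrix commuting with `N` is determined by its value at `x`, hence is a polynomial
`∑ cᵢ Nⁱ` in `N`, and these coefficients are unique; since `tr Nⁱ = 0` for `i ≥ 1`, tracelessness
kills `c₀`. Then `v N + v̄ M = N (c + N T)` with `c = v + v̄ μ₂` and `T` a polynomial in `N`,
so `N ^ n = 0` gives `(v N + v̄ M) ^ (n - 1) = c ^ (n - 1) N ^ (n - 1)`. Finally `v + v̄ μ₂ = 0`
has a solution `v ≠ 0` iff `|μ₂| = 1`, namely a square root of `-μ₂`. -/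

open Matrix Polynomial ComplexConjugate

namespace Matrix

section Nilpotent

variable {ι R : Type*} [Fintype ι] [DecidableEq ι] [CommRing R]

theorem pow_card_eq_zero_of_isNilpotent_s5 [IsDomain R] {N : Matrix ι ι R} (hN : IsNilpotent N) :
    N ^ Fintype.card ι = 0 := by
  have hchar : N.charpoly = X ^ Fintype.card ι :=
    sub_eq_zero.mp (isNilpotent_charpoly_sub_pow_of_isNilpotent hN).eq_zero
  simpa [hchar] using N.aeval_self_charpoly

theorem trace_pow_eq_zero_of_isNilpotent [IsDomain R] {N : Matrix ι ι R} (hN : IsNilpotent N)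
    {k : ℕ} (hk : k ≠ 0) : (N ^ k).trace = 0 :=
  (isNilpotent_trace_of_isNilpotent (hN.pow_of_pos hk)).eq_zero

theorem exists_mulVec_ne_zero_s5 {A : Matrix ι ι R} (hA : A ≠ 0) : ∃ x, A *ᵥ x ≠ 0 := by
  by_contra! h
  exact hA (toLin'.injective (LinearMap.ext fun x => by simpa using h x))

end Nilpotent

section Cyclic

variable {K : Type*} [Field K] {n : ℕ} {N : Matrix (Fin n) (Fin n) K}

-- Apply `N ^ (n - 1 - k)` to a vanishing combination whose first nonzero coefficient is at `k`.
theorem linearIndependent_pow_mulVec_s5 (hN : N ^ n = 0) {x : Fin n → K}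
    (hx : N ^ (n - 1) *ᵥ x ≠ 0) :
    LinearIndependent K fun i : Fin n => N ^ (i : ℕ) *ᵥ x := by
  rw [Fintype.linearIndependent_iff]
  intro g hg
  by_contra! hne
  obtain ⟨k, hk, hmin⟩ := wellFounded_lt.has_min {i | g i ≠ 0} hne
  have hpow : ∀ i : Fin n, k < i → N ^ (n - 1 - k + i) = 0 := fun i hi => by
    rw [show n - 1 - k + i = n + (i - k - 1) by omega, pow_add, hN, zero_mul]
  have hsum := congrArg (N ^ (n - 1 - (k : ℕ)) *ᵥ ·) hg
  simp only [mulVec_sum, mulVec_smul, mulVec_mulVec, ← pow_add, mulVec_zero] at hsum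
  rw [Finset.sum_eq_single k] at hsum
  · rw [show n - 1 - k + k = n - 1 by omega] at hsum
    exact hx ((smul_eq_zero.mp hsum).resolve_left hk)
  · intro i _ hik
    rcases lt_or_gt_of_ne hik with hlt | hgt
    · rw [not_not.mp fun h => hmin i h hlt, zero_smul]
    · rw [hpow i hgt, zero_mulVec, smul_zero]
  · simp

theorem linearIndependent_pow_s5 (hN : N ^ n = 0) (hN' : N ^ (n - 1) ≠ 0) :
    LinearIndependent K fun i : Fin n => N ^ (i : ℕ) := by
  obtain ⟨x, hx⟩ := exists_mulVec_ne_zero_s5 hN'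
  exact .of_comp ((LinearMap.applyₗ x).comp toLin'.toLinearMap)
    (linearIndependent_pow_mulVec_s5 hN hx)

theorem exists_eq_sum_pow_of_commute (hN : N ^ n = 0) (hN' : N ^ (n - 1) ≠ 0)
    {M : Matrix (Fin n) (Fin n) K} (hMN : Commute M N) :
    ∃ c : Fin n → K, M = ∑ i, c i • N ^ (i : ℕ) := by
  obtain ⟨x, hx⟩ := exists_mulVec_ne_zero_s5 hN'
  have hspan := (linearIndependent_pow_mulVec_s5 hN hx).span_eq_top_of_card_eq_finrank' (by simp)
  obtain ⟨c, hc⟩ :=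
    (Submodule.mem_span_range_iff_exists_fun K).mp (hspan ▸ Submodule.mem_top (x := M *ᵥ x))
  set P := ∑ i, c i • N ^ (i : ℕ)
  have hPx : P *ᵥ x = M *ᵥ x := by simp only [P, sum_mulVec, smul_mulVec, hc]
  refine ⟨c, toLin'.injective (LinearMap.ext_on_range hspan fun j => ?_)⟩
  have hP : Commute P (N ^ (j : ℕ)) :=
    .sum_left _ _ _ fun i _ => (Commute.pow_pow_self N i j).smul_left (c i)
  calc toLin' M (N ^ (j : ℕ) *ᵥ x) = N ^ (j : ℕ) *ᵥ (M *ᵥ x) := by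
        rw [toLin'_apply, mulVec_mulVec, mulVec_mulVec, (hMN.pow_right j).eq]
    _ = N ^ (j : ℕ) *ᵥ (P *ᵥ x) := by rw [hPx]
    _ = toLin' P (N ^ (j : ℕ) *ᵥ x) := by
        rw [toLin'_apply, mulVec_mulVec, mulVec_mulVec, hP.eq]

end Cyclic

theorem existsUnique_eq_sum_pow_succ_of_commute {K : Type*} [Field K] [CharZero K] {m : ℕ}
    {N M : Matrix (Fin (m + 1)) (Fin (m + 1)) K} (hN : N ^ (m + 1) = 0) (hN' : N ^ m ≠ 0)
    (hM : M.trace = 0) (hMN : Commute M N) :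
    ∃! μ : Fin m → K, M = ∑ i : Fin m, μ i • N ^ ((i : ℕ) + 1) := by
  obtain ⟨c, hc⟩ := exists_eq_sum_pow_of_commute hN hN' hMN
  rw [Fin.sum_univ_succ] at hc
  have htr : c 0 = 0 ∨ (m : K) + 1 = 0 := by
    simpa [trace_sum, trace_pow_eq_zero_of_isNilpotent ⟨_, hN⟩, hM] using congrArg trace hc
  have hc0 := htr.resolve_right m.cast_add_one_ne_zero
  have hli := (linearIndependent_pow_s5 hN hN').comp Fin.succ (Fin.succ_injective _)
  refine ⟨fun i => c i.succ, by simpa [hc0] using hc, fun μ hμ => funext ?_⟩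
  refine Fintype.linearIndependent_iffₛ.mp hli _ _ ?_
  simpa [hc0] using hμ.symm.trans hc

end Matrix

section PowerOfNilpotent

variable {R A : Type*} [CommRing R] [Ring A] [Algebra R A]

theorem Polynomial.X_pow_succ_dvd_pow_sub_of_coeff_zero_eq_zero {q : R[X]} (hq : q.coeff 0 = 0)
    (k : ℕ) : X ^ (k + 1) ∣ q ^ k - C (q.coeff 1 ^ k) * X ^ k := by
  obtain ⟨r, rfl⟩ := X_dvd_iff.mpr hq
  obtain ⟨s, hs⟩ := X_dvd_iff.mpr (show (r - C (r.coeff 0)).coeff 0 = 0 by simp)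
  obtain ⟨u, hu⟩ := sub_dvd_pow_sub_pow r (C (r.coeff 0)) k
  refine ⟨s * u, ?_⟩
  rw [coeff_X_mul, mul_pow, C_pow, mul_comm (C _ ^ k), ← mul_sub, hu, hs]
  ring

theorem Polynomial.aeval_pow_of_coeff_zero_eq_zero {q : R[X]} (hq : q.coeff 0 = 0) {N : A}
    {k : ℕ} (hN : N ^ (k + 1) = 0) : aeval N (q ^ k) = q.coeff 1 ^ k • N ^ k := by
  obtain ⟨t, ht⟩ := X_pow_succ_dvd_pow_sub_of_coeff_zero_eq_zero hq k
  rw [sub_eq_iff_eq_add] at ht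
  simp [ht, hN, Algebra.smul_def]

theorem smul_add_smul_sum_pow_succ_pow {N : A} {k : ℕ} (hN : N ^ (k + 1) = 0) (v w : R)
    {m : ℕ} (μ : Fin (m + 1) → R) :
    (v • N + w • ∑ i, μ i • N ^ ((i : ℕ) + 1)) ^ k = (v + w * μ 0) ^ k • N ^ k := by
  have h := aeval_pow_of_coeff_zero_eq_zero
    (q := C v * X + C w * ∑ i, C (μ i) * X ^ ((i : ℕ) + 1)) (by simp [coeff_X_pow]) hN
  convert h using 2
  · simp [Algebra.smul_def]
  · simp [coeff_X_pow, Fin.sum_univ_succ]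

end PowerOfNilpotent

theorem Complex.exists_ne_zero_add_conj_mul_eq_zero_iff (μ : ℂ) :
    (∃ v : ℂ, v ≠ 0 ∧ v + conj v * μ = 0) ↔ ‖μ‖ = 1 := by
  constructor
  · rintro ⟨v, hv, h⟩
    have hnorm := congrArg (‖·‖) (eq_neg_of_add_eq_zero_left h)
    simp only [norm_neg, norm_mul, Complex.norm_conj] at hnorm
    exact (mul_eq_left₀ (norm_ne_zero_iff.mpr hv)).mp hnorm.symm
  · intro hμ
    obtain ⟨w, hw⟩ := IsAlgClosed.exists_pow_nat_eq (-μ) two_pos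
    have hw1 : ‖w‖ ^ 2 = 1 := by rw [← norm_pow, hw, norm_neg, hμ]
    have hconj : conj w * w = 1 := by rw [Complex.conj_mul']; exact_mod_cast hw1
    refine ⟨w, by rintro rfl; simp at hw1, ?_⟩
    rw [← neg_neg μ, ← hw]
    linear_combination (-w) * hconj

-- `μ i` stands for the paper's `μ_(i+2)`, the coefficient of `N ^ (i + 1)`.
/-- For `N` principal nilpotent of size `n ≥ 2` and `M` traceless commuting with `N`:
(i) there are unique coefficients `μ₂, …, μₙ` with `M = μ₂ N + μ₃ N² + ⋯ + μₙ N^(n-1)`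
(here `μ i` encodes `μ_(i+2)`, the coefficient of `N^(i+1)`); and (ii) with these
coefficients, `(v N + conj v M)^(n-1) ≠ 0` for all nonzero `v : ℂ` iff `|μ₂| ≠ 1`. -/
theorem exists_unique_higher_beltrami
    (n : ℕ) (hn : 2 ≤ n) (N M : Matrix (Fin n) (Fin n) ℂ)
    (hN : IsNilpotent N ∧ N ^ (n - 1) ≠ 0)
    (hM : M.trace = 0) (hcomm : M * N = N * M) :
    (∃! μ : Fin (n - 1) → ℂ, M = ∑ i : Fin (n - 1), μ i • N ^ ((i : ℕ) + 1)) ∧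
    ∀ μ : Fin (n - 1) → ℂ, M = ∑ i : Fin (n - 1), μ i • N ^ ((i : ℕ) + 1) →
      ((∀ v : ℂ, v ≠ 0 → (v • N + (starRingEnd ℂ) v • M) ^ (n - 1) ≠ 0) ↔
        ‖μ ⟨0, by omega⟩‖ ≠ 1) := by
  obtain ⟨m, rfl⟩ : ∃ m, n = m + 2 := ⟨n - 2, by omega⟩
  obtain ⟨hnil, hN' : N ^ (m + 1) ≠ 0⟩ := hN
  have hNn : N ^ (m + 2) = 0 := by simpa using pow_card_eq_zero_of_isNilpotent_s5 hnil
  refine ⟨existsUnique_eq_sum_pow_succ_of_commute hNn hN' hM hcomm,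
    fun (μ : Fin (m + 1) → ℂ) hμ => ?_⟩
  have hpow (v : ℂ) :
      (v • N + conj v • M) ^ (m + 1) = (v + conj v * μ 0) ^ (m + 1) • N ^ (m + 1) :=
    hμ ▸ smul_add_smul_sum_pow_succ_pow hNn v (conj v) μ
  rw [Ne, ← Complex.exists_ne_zero_add_conj_mul_eq_zero_iff]
  simp [hpow, hN']
end

section
/- Let L be a finite-dimensional simple Lie algebra over ℂ with Killing form κ, and let (Φ1, Φ2) be a pair of elements of L with Φ1 principal nilpotent and ⁅Φ1, Φ2⁆ = 0. Then the subspace V = {(a, b) ∈ L × L : a ∈ range(ad Φ1) and ⁅Φ1, b⁆ = ⁅Φ2, a⁆} is isotropic for the pairing ω((a, b), (a′, b′)) = κ(a, b′) − κ(b, a′): for all (a, b) and (a′, b′) in V one has κ(a, b′) = κ(b, a′). -/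
/-- An element `F` of a finite-dimensional complex Lie algebra is *principal nilpotent*
if `ad F` is a nilpotent endomorphism and the centralizer `ker (ad F)` has dimension
equal to the rank of the Lie algebra (the common dimension of the Cartan subalgebras). -/
def IsPrincipalNilpotent (L : Type*) [LieRing L] [LieAlgebra ℂ L]
    [Module.Finite ℂ L] (F : L) : Prop :=
  IsNilpotent (LieAlgebra.ad ℂ L F) ∧
    Module.finrank ℂ (LinearMap.ker (LieAlgebra.ad ℂ L F)) = LieAlgebra.rank ℂ L

/-! Write `a = ⁅Φ1, m⁆`, `a' = ⁅Φ1, m'⁆`. Invariance of `κ` and the defining equation of `V` give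
`κ(a, b') = -κ(m, ⁅Φ2, ⁅Φ1, m'⁆⁆)`. Because `Φ1` and `Φ2` commute, `ad Φ2 ∘ ad Φ1` is a product of
commuting skew-adjoint operators, hence self-adjoint; moving it onto `m` and running the same
steps backwards yields `κ(b, a')`. -/

namespace LinearMap.BilinForm.lieInvariant

variable {R L M : Type*} [CommRing R] [LieRing L] [AddCommGroup M] [Module R M]
  [LieRingModule L M] {Φ : LinearMap.BilinForm R M} {x y : L}

lemma apply_lie_lie_eq (hΦ : Φ.lieInvariant L) (hxy : ⁅x, y⁆ = 0) (m n : M) :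
    Φ ⁅y, ⁅x, m⁆⁆ n = Φ m ⁅y, ⁅x, n⁆⁆ := by
  have hcomm : ⁅x, ⁅y, n⁆⁆ = ⁅y, ⁅x, n⁆⁆ := by
    rw [leibniz_lie, hxy, zero_lie, zero_add]
  rw [hΦ, hΦ, neg_neg, hcomm]

theorem apply_lie_eq_apply_lie (hΦ : Φ.lieInvariant L) (hxy : ⁅x, y⁆ = 0) {m m' b b' : M}
    (hb : ⁅x, b⁆ = ⁅y, ⁅x, m⁆⁆) (hb' : ⁅x, b'⁆ = ⁅y, ⁅x, m'⁆⁆) :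
    Φ ⁅x, m⁆ b' = Φ b ⁅x, m'⁆ :=
  calc Φ ⁅x, m⁆ b' = -Φ m ⁅y, ⁅x, m'⁆⁆ := by rw [hΦ, hb']
    _ = -Φ ⁅x, b⁆ m' := by rw [← apply_lie_lie_eq hΦ hxy, hb]
    _ = Φ b ⁅x, m'⁆ := by rw [hΦ, neg_neg]

end LinearMap.BilinForm.lieInvariant

theorem var_isotropic_general
    {L : Type*} [LieRing L] [LieAlgebra ℂ L] [FiniteDimensional ℂ L]
    (Φ1 Φ2 : L)
    (hc : ⁅Φ1, Φ2⁆ = 0) :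
    ∀ a b a' b' : L,
      a ∈ LinearMap.range ((LieAlgebra.ad ℂ L Φ1) : L →ₗ[ℂ] L) →
      ⁅Φ1, b⁆ = ⁅Φ2, a⁆ →
      a' ∈ LinearMap.range ((LieAlgebra.ad ℂ L Φ1) : L →ₗ[ℂ] L) →
      ⁅Φ1, b'⁆ = ⁅Φ2, a'⁆ →
      killingForm ℂ L a b' = killingForm ℂ L b a' := by
  rintro _ b _ b' ⟨m, rfl⟩ hb ⟨m', rfl⟩ hb'
  exact (LieModule.traceForm_lieInvariant ℂ L L).apply_lie_eq_apply_lie hc hb hb'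

/-- The variation space `V = {(a,b) : a ∈ Im(ad Φ1), ⁅Φ1, b⁆ = ⁅Φ2, a⁆}` is isotropic
for the pairing `ω((a,b),(a',b')) = κ(a,b') - κ(b,a')` built from the Killing form `κ`:
for all `(a, b)` and `(a', b')` in `V` one has `κ(a, b') = κ(b, a')`. -/
theorem var_isotropic
    {L : Type*} [LieRing L] [LieAlgebra ℂ L] [FiniteDimensional ℂ L]
    [LieAlgebra.IsSimple ℂ L] (Φ1 Φ2 : L)
    (h1 : IsPrincipalNilpotent L Φ1) (hc : ⁅Φ1, Φ2⁆ = 0) :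
    ∀ a b a' b' : L,
      a ∈ LinearMap.range ((LieAlgebra.ad ℂ L Φ1) : L →ₗ[ℂ] L) →
      ⁅Φ1, b⁆ = ⁅Φ2, a⁆ →
      a' ∈ LinearMap.range ((LieAlgebra.ad ℂ L Φ1) : L →ₗ[ℂ] L) →
      ⁅Φ1, b'⁆ = ⁅Φ2, a'⁆ →
      killingForm ℂ L a b' = killingForm ℂ L b a' :=
  var_isotropic_general Φ1 Φ2 hc
end
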